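/- arXiv:1004.4942 — 2 statements merged into one kernel-verified Lean document; each statement's English description precedes it below -/
import Mathlib

section
/- Define polynomials f_n(x) by f_0(x)=1, f_1(x)=0, f_{n+1}(x)=x·f_n(x)+f_{n-1}(x). Then for all k ≥ 1, f_{2k}(γ) = Σ_{l=0}^{k-1} C(k+l-1, 2l)·γ^{2l} and f_{2k+1}(γ) = Σ_{l=0}^{k-1} C(k+l, 2l+1)·γ^{2l+1}. -/
open Polynomial Finset

lemma lemA (k : ℕ) (hk : 1 ≤ k) :
    Polynomial.X * (∑ l ∈ Finset.range k, Polynomial.C (((k + l).choose (2*l+1) : ℤ)) * Polynomial.X ^ (2*l+1))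
      + ∑ l ∈ Finset.range k, Polynomial.C (((k + l - 1).choose (2*l) : ℤ)) * Polynomial.X ^ (2*l)
    = ∑ l ∈ Finset.range (k+1), Polynomial.C (((k + l).choose (2*l) : ℤ)) * Polynomial.X ^ (2*l) := by
  rw [Finset.mul_sum]
  rw [Finset.sum_range_succ' (fun l => Polynomial.C (((k + l).choose (2*l) : ℤ)) * Polynomial.X ^ (2*l)) k]
  have hpascal : ∀ l ∈ Finset.range k,
      Polynomial.C (((k + (l+1)).choose (2*(l+1)) : ℤ)) * Polynomial.X ^ (2*(l+1))
      = Polynomial.C (((k + l).choose (2*l+1) : ℤ)) * Polynomial.X ^ (2*(l+1))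
        + Polynomial.C (((k + l).choose (2*l+2) : ℤ)) * Polynomial.X ^ (2*(l+1)) := by
    intro l _
    have h : (k + (l+1)).choose (2*(l+1)) = (k + l).choose (2*l+1) + (k + l).choose (2*l+2) := by
      rw [show k + (l+1) = (k+l) + 1 from by ring, show 2*(l+1) = (2*l+1) + 1 from by ring,
        Nat.choose_succ_succ']
    rw [h, Nat.cast_add, Polynomial.C_add, add_mul]
  rw [Finset.sum_congr rfl hpascal, Finset.sum_add_distrib]
  have hshift : ∑ l ∈ Finset.range k, Polynomial.C (((k + l).choose (2*l+2) : ℤ)) * Polynomial.X ^ (2*(l+1))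
      = ∑ l ∈ Finset.range k, Polynomial.C (((k + l - 1).choose (2*l) : ℤ)) * Polynomial.X ^ (2*l) - 1 := by
    have key : ∑ l ∈ Finset.range (k+1), Polynomial.C (((k + l - 1).choose (2*l) : ℤ)) * Polynomial.X ^ (2*l)
        = (∑ l ∈ Finset.range k, Polynomial.C (((k + l).choose (2*l+2) : ℤ)) * Polynomial.X ^ (2*(l+1))) + 1 := by
      rw [Finset.sum_range_succ' (fun l => Polynomial.C (((k + l - 1).choose (2*l) : ℤ)) * Polynomial.X ^ (2*l)) k]
      congr 1
      simp
    have key2 := Finset.sum_range_succ (fun l => Polynomial.C (((k + l - 1).choose (2*l) : ℤ)) * Polynomial.X ^ (2*l)) k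
    have fk : Polynomial.C (((k + k - 1).choose (2*k) : ℤ)) * Polynomial.X ^ (2*k) = (0 : Polynomial ℤ) := by
      have h0 : (k+k-1).choose (2*k) = 0 := Nat.choose_eq_zero_of_lt (by omega)
      simp [h0]
    rw [key, fk, add_zero] at key2
    linear_combination key2
  rw [hshift]
  have h0 : Polynomial.C (((k + 0).choose (2*0) : ℤ)) * Polynomial.X ^ (2*0) = 1 := by simp
  rw [h0]
  have hx : ∀ l ∈ Finset.range k,
      Polynomial.X * (Polynomial.C (((k + l).choose (2*l+1) : ℤ)) * Polynomial.X ^ (2*l+1))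
      = Polynomial.C (((k + l).choose (2*l+1) : ℤ)) * Polynomial.X ^ (2*(l+1)) := by
    intro l _
    ring
  rw [Finset.sum_congr rfl hx]
  ring

lemma lemB (k : ℕ) (hk : 1 ≤ k) :
    Polynomial.X * (∑ l ∈ Finset.range (k+1), Polynomial.C (((k + l).choose (2*l) : ℤ)) * Polynomial.X ^ (2*l))
      + ∑ l ∈ Finset.range k, Polynomial.C (((k + l).choose (2*l+1) : ℤ)) * Polynomial.X ^ (2*l+1)
    = ∑ l ∈ Finset.range (k+1), Polynomial.C (((k + 1 + l).choose (2*l+1) : ℤ)) * Polynomial.X ^ (2*l+1) := by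
  rw [Finset.mul_sum]
  rw [Finset.sum_range_succ (fun l => Polynomial.X * (Polynomial.C (((k + l).choose (2*l) : ℤ)) * Polynomial.X ^ (2*l))) k]
  rw [Finset.sum_range_succ (fun l => Polynomial.C (((k + 1 + l).choose (2*l+1) : ℤ)) * Polynomial.X ^ (2*l+1)) k]
  have hpascal : ∀ l ∈ Finset.range k,
      Polynomial.C (((k + 1 + l).choose (2*l+1) : ℤ)) * Polynomial.X ^ (2*l+1)
      = Polynomial.X * (Polynomial.C (((k + l).choose (2*l) : ℤ)) * Polynomial.X ^ (2*l))
        + Polynomial.C (((k + l).choose (2*l+1) : ℤ)) * Polynomial.X ^ (2*l+1) := by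
    intro l _
    have h : (k + 1 + l).choose (2*l+1) = (k + l).choose (2*l) + (k + l).choose (2*l+1) := by
      rw [show k + 1 + l = (k+l) + 1 from by ring, Nat.choose_succ_succ']
    rw [h, Nat.cast_add, Polynomial.C_add, add_mul]
    ring
  rw [Finset.sum_congr rfl hpascal, Finset.sum_add_distrib]
  have h1 : Polynomial.C (((k + k).choose (2*k) : ℤ)) = 1 := by
    rw [show 2*k = k+k from by ring, Nat.choose_self]
    norm_num
  have h2 : Polynomial.C (((k + 1 + k).choose (2*k+1) : ℤ)) = 1 := by
    rw [show 2*k+1 = k+1+k from by ring, Nat.choose_self]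
    norm_num
  rw [h1, h2]
  ring

noncomputable def fpoly : ℕ → Polynomial ℤ
  | 0 => 1
  | 1 => 0
  | (n + 2) => Polynomial.X * fpoly (n + 1) + fpoly n

theorem stmt_3 (k : ℕ) (hk : 1 ≤ k) :
    fpoly (2 * k) =
      ∑ l ∈ Finset.range k,
        Polynomial.C (((k + l - 1).choose (2 * l) : ℤ)) * Polynomial.X ^ (2 * l) ∧
    fpoly (2 * k + 1) =
      ∑ l ∈ Finset.range k,
        Polynomial.C (((k + l).choose (2 * l + 1) : ℤ)) * Polynomial.X ^ (2 * l + 1) := by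
  induction k with
  | zero => omega
  | succ n ih =>
    rcases Nat.lt_or_ge n 1 with h | hn
    · interval_cases n
      constructor
      · show fpoly 2 = _
        simp [fpoly, Finset.sum_range_one]
      · show fpoly 3 = _
        simp [fpoly, Finset.sum_range_one]
    · obtain ⟨ih1, ih2⟩ := ih hn
      have hsum : (∑ l ∈ Finset.range (n+1), Polynomial.C (((n + 1 + l - 1).choose (2 * l) : ℤ)) * Polynomial.X ^ (2 * l))
          = ∑ l ∈ Finset.range (n+1), Polynomial.C (((n + l).choose (2 * l) : ℤ)) * Polynomial.X ^ (2 * l) :=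
        Finset.sum_congr rfl (fun l _ => by rw [show n + 1 + l - 1 = n + l from by omega])
      have heven : fpoly (2 * (n+1)) =
          ∑ l ∈ Finset.range (n+1), Polynomial.C (((n + 1 + l - 1).choose (2 * l) : ℤ)) * Polynomial.X ^ (2 * l) := by
        rw [show 2*(n+1) = 2*n + 2 from by ring]
        show Polynomial.X * fpoly (2*n+1) + fpoly (2*n) = _
        rw [ih1, ih2, hsum]
        exact lemA n hn
      refine ⟨heven, ?_⟩
      show Polynomial.X * fpoly (2*(n+1)) + fpoly (2*n+1) = _
      rw [heven, ih2, hsum]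
      exact lemB n hn
end

section
/- Let G = (V,E) be a connected finite multigraph and let C(G) = { s ⊆ E : the spanning subgraph (V,s) has no vertex of degree 1 } be the set of sub-coregraphs. Then 2^{n(G)} ≤ |C(G)| ≤ ((5−√5)/2)^{n(G)−1} + ((5+√5)/2)^{n(G)−1}, where n(G) = |E|−|V|+1 is the nullity of G. -/
open scoped Classical

/-- The polynomials `f_n`: `f 0 = 1`, `f 1 = 0`, `f (n+2) = γ f (n+1) + f n`,
evaluated at `γ`. -/
noncomputable def fval {R : Type*} [CommRing R] (γ : R) : ℕ → R
  | 0 => 1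
  | 1 => 0
  | (n + 2) => γ * fval γ (n + 1) + fval γ n

/-- Degree of vertex `i` in the spanning subgraph `(V, s)` of the multigraph with
edge-endpoint map `ends : E → Sym2 V` (a loop counts twice). -/
noncomputable def mdeg {V E : Type*} [DecidableEq V]
    (ends : E → Sym2 V) (s : Finset E) (i : V) : ℕ :=
  ∑ e ∈ s, (if ends e = Sym2.diag i then 2 else if i ∈ ends e then 1 else 0)

/-- The theta polynomial `θ_G(β,γ) = Σ_{s ⊆ E} β^{|s|} ∏_{i ∈ V} f_{d_i(s)}(γ)`. -/
noncomputable def theta {V E : Type*} [Fintype V] [Fintype E] [DecidableEq V]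
    {R : Type*} [CommRing R] (ends : E → Sym2 V) (β γ : R) : R :=
  ∑ s : Finset E, β ^ s.card * ∏ i : V, fval γ (mdeg ends s i)

/-!
For a non-loop edge `e = pq`, the identity `f (a + b) = f a * f b + f (a + 1) * f (b + 1)` with
`f 0 = 1` shows that `θ(1, γ)` does not change when `e` is contracted: the subgraphs avoiding `e`
and their extensions by `e` pair up into the subgraphs of the contracted graph. Contracting the
edges of a spanning tree leaves a bouquet of `n(G)` loops at one vertex, where
`θ(1, γ) = ∑ s ⊆ loops, f (2 |s|)`.

At `γ = 0` the weight `∏ i, f (d i)` is `0` or `1` and vanishes when a degree is `1`, while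
`f (2k) = 1`, so `2 ^ n(G) = θ(1, 0) ≤ |C(G)|`. At `γ = 1` every sub-coregraph has weight at least
`1` and `f (n + 1) = F n` (Fibonacci), so Binet's formula evaluates the bouquet: the two bases are
`1 + ψ² = -ψ √5` and `1 + φ² = φ √5`.
-/

section Fval

variable {R : Type*} [CommRing R]

theorem fval_add (γ : R) (m n : ℕ) :
    fval γ (m + n) = fval γ m * fval γ n + fval γ (m + 1) * fval γ (n + 1) := by
  induction n generalizing m with
  | zero => simp [fval]
  | succ n ih =>
    rw [← add_assoc, add_right_comm, ih (m + 1)]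
    simp only [fval]
    ring

theorem fval_zero_two_mul (k : ℕ) : fval (0 : R) (2 * k) = 1 := by
  induction k with
  | zero => rfl
  | succ k ih => simpa [Nat.mul_succ, fval] using ih

theorem fval_zero_two_mul_add_one (k : ℕ) : fval (0 : R) (2 * k + 1) = 0 := by
  induction k with
  | zero => rfl
  | succ k ih => simpa [Nat.mul_succ, fval] using ih

theorem fval_one_succ (n : ℕ) : fval (1 : R) (n + 1) = Nat.fib n := by
  induction n using Nat.twoStepInduction with
  | zero => simp [fval]
  | one => simp [fval]
  | more n ih₀ ih₁ =>
    rw [fval, ih₀, ih₁, Nat.fib_add_two]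
    push_cast
    ring

theorem fval_zero_eq_zero_or_one (n : ℕ) : fval (0 : R) n = 0 ∨ fval (0 : R) n = 1 := by
  obtain ⟨k, rfl | rfl⟩ := Nat.even_or_odd' n
  · exact .inr (fval_zero_two_mul k)
  · exact .inl (fval_zero_two_mul_add_one k)

end Fval

section Bouquet

open scoped goldenRatio

theorem fval_one_eq (n : ℕ) : fval (1 : ℝ) n = (φ ^ ((n : ℤ) - 1) - ψ ^ ((n : ℤ) - 1)) / √5 := by
  cases n with
  | zero =>
    simp only [fval, CharP.cast_eq_zero, zero_sub, zpow_neg_one, Real.inv_goldenRatio,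
      Real.inv_goldenConj]
    rw [neg_sub_neg, Real.goldenRatio_sub_goldenConj, div_self (by positivity)]
  | succ n => simp [fval_one_succ, Real.coe_fib_eq]

theorem sum_powerset_fval_zero_two_mul {R E : Type*} [CommRing R] (t : Finset E) :
    ∑ s ∈ t.powerset, fval (0 : R) (2 * s.card) = 2 ^ t.card := by
  simp [fval_zero_two_mul, Finset.card_powerset]

theorem sum_powerset_fval_one_two_mul {E : Type*} (t : Finset E) :
    ∑ s ∈ t.powerset, fval (1 : ℝ) (2 * s.card) =
      ((5 - √5) / 2) ^ ((t.card : ℤ) - 1) + ((5 + √5) / 2) ^ ((t.card : ℤ) - 1) := by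
  have binomial (r : ℝ) (hr : r ≠ 0) :
      ∑ s ∈ t.powerset, r ^ (2 * (s.card : ℤ) - 1) = r⁻¹ * (r ^ 2 + 1) ^ t.card := by
    have hpow (k : ℕ) : r ^ (2 * (k : ℤ) - 1) = r⁻¹ * (r ^ 2) ^ k := by
      rw [zpow_sub_one₀ hr, ← pow_mul, ← zpow_natCast, mul_comm]
      push_cast
      ring
    simp_rw [hpow, ← Finset.mul_sum]
    simpa using congrArg (r⁻¹ * ·) (Finset.sum_pow_mul_eq_add_pow (r ^ 2) 1 t)
  have h5 : √5 ^ 2 = 5 := Real.sq_sqrt (by norm_num)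
  have hφ : (5 + √5) / 2 = φ * √5 := by rw [Real.goldenRatio]; linear_combination -h5 / 2
  have hψ : (5 - √5) / 2 = -ψ * √5 := by rw [Real.goldenConj]; linear_combination -h5 / 2
  have hφ₂ : φ ^ 2 + 1 = φ * √5 := by rw [← hφ, Real.goldenRatio]; linear_combination h5 / 4
  have hψ₂ : ψ ^ 2 + 1 = -ψ * √5 := by rw [← hψ, Real.goldenConj]; linear_combination h5 / 4
  simp_rw [fval_one_eq, ← Finset.sum_div, Finset.sum_sub_distrib]
  push_cast
  rw [binomial φ Real.goldenRatio_ne_zero, binomial ψ Real.goldenConj_ne_zero, hφ₂, hψ₂, hφ, hψ,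
    zpow_sub_one₀ (mul_ne_zero (neg_ne_zero.2 Real.goldenConj_ne_zero) (by positivity)),
    zpow_sub_one₀ (by positivity), zpow_natCast, zpow_natCast,
    mul_inv, mul_inv, inv_neg]
  generalize φ = a, ψ = b -- otherwise `ring` unfolds `φ` and `ψ`
  ring

end Bouquet

theorem Sym2.toMultiset_mk {α : Type*} (a b : α) : s(a, b).toMultiset = {a, b} := rfl

theorem Sym2.toMultiset_map {α β : Type*} (f : α → β) (z : Sym2 α) :
    (z.map f).toMultiset = z.toMultiset.map f := by
  induction z using Sym2.ind with
  | _ a b => rfl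

theorem Multiset.count_map_update_id {α : Type*} [DecidableEq α] (m : Multiset α) {p q : α}
    (hpq : p ≠ q) (i : α) :
    (m.map (Function.update id q p)).count i =
      if i = q then 0 else if i = p then m.count p + m.count q else m.count i := by
  induction m using Multiset.induction_on with
  | empty => simp
  | cons a m ih =>
    rw [Multiset.map_cons, Multiset.count_cons, ih]
    by_cases ha : a = q <;> simp only [Multiset.count_cons, Function.update_apply, ha, id] <;>
      split_ifs <;> simp_all <;> omega

theorem Sym2.eq_diag_of_forall_mem_eq {α : Type*} {z : Sym2 α} {a : α} (h : ∀ v ∈ z, v = a) :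
    z = Sym2.diag a := by
  induction z using Sym2.ind with
  | _ x y => rw [h x (Sym2.mem_mk_left x y), h y (Sym2.mem_mk_right x y)]; rfl

theorem Relation.ReflTransGen.exists_ne {α : Type*} {r : α → α → Prop} {a b : α}
    (h : Relation.ReflTransGen r a b) (hab : a ≠ b) : ∃ x y, r x y ∧ x ≠ y := by
  induction h with
  | refl => exact absurd rfl hab
  | @tail c d _ hcd ih =>
    by_cases hc : c = d
    · exact ih (hc ▸ hab)
    · exact ⟨c, d, hcd, hc⟩

section Multigraph

variable {V E : Type*} [DecidableEq V]

theorem mdeg_eq_sum_count (ends : E → Sym2 V) (s : Finset E) (i : V) :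
    mdeg ends s i = ∑ e ∈ s, (ends e).toMultiset.count i := by
  refine Finset.sum_congr rfl fun e _ => ?_
  induction ends e using Sym2.ind with
  | _ a b =>
    rw [Sym2.toMultiset_mk]
    by_cases ha : a = i <;> by_cases hb : b = i <;> simp [Sym2.diag, ha, hb, Ne.symm]

theorem mdeg_insert_of_eq_mk {ends : E → Sym2 V} {s : Finset E} {e : E} {p q : V} (he : e ∉ s)
    (hends : ends e = s(p, q)) (hpq : p ≠ q) (i : V) :
    mdeg ends (insert e s) i = if i = p ∨ i = q then mdeg ends s i + 1 else mdeg ends s i := by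
  rw [mdeg_eq_sum_count, mdeg_eq_sum_count, Finset.sum_insert he, hends, Sym2.toMultiset_mk]
  by_cases hp : i = p <;> by_cases hq : i = q <;> simp_all [Ne.symm, add_comm]

theorem mdeg_of_forall_eq_diag {ends : E → Sym2 V} {s : Finset E} {a : V}
    (h : ∀ e ∈ s, ends e = Sym2.diag a) (i : V) :
    mdeg ends s i = if i = a then 2 * s.card else 0 := by
  rw [mdeg_eq_sum_count, Finset.sum_congr rfl fun e he => by rw [h e he]]
  by_cases hi : i = a <;> simp [Sym2.diag, Sym2.toMultiset_mk, hi, mul_comm]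

def contractEnds (ends : E → Sym2 V) (p q : V) : E → Sym2 V :=
  fun e => (ends e).map (Function.update id q p)

theorem mdeg_contractEnds (ends : E → Sym2 V) (s : Finset E) {p q : V} (hpq : p ≠ q) (i : V) :
    mdeg (contractEnds ends p q) s i =
      if i = q then 0 else if i = p then mdeg ends s p + mdeg ends s q else mdeg ends s i := by
  simp only [mdeg_eq_sum_count, contractEnds, Sym2.toMultiset_map,
    Multiset.count_map_update_id _ hpq]
  split_ifs <;> simp [Finset.sum_add_distrib]

def ShareEdge (ends : E → Sym2 V) (U : Finset E) (x y : V) : Prop :=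
  ∃ e ∈ U, x ∈ ends e ∧ y ∈ ends e

theorem reflTransGen_shareEdge_contractEnds {ends : E → Sym2 V} {U : Finset E} {e : E}
    {p q : V} (hends : ends e = s(p, q)) {x y : V}
    (h : Relation.ReflTransGen (ShareEdge ends U) x y) :
    Relation.ReflTransGen (ShareEdge (contractEnds ends p q) (U.erase e))
      (Function.update id q p x) (Function.update id q p y) := by
  refine h.lift' _ fun u w ⟨f, hf, hu, hw⟩ => ?_
  change Relation.ReflTransGen _ _ _
  by_cases hfe : f = e
  · subst hfe
    rw [hends, Sym2.mem_iff] at hu hw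
    have hto_p : ∀ v, v = p ∨ v = q → Function.update id q p v = p := by
      rintro v (rfl | rfl) <;> simp [Function.update_apply]
    rw [hto_p u hu, hto_p w hw]
  · exact .single ⟨f, Finset.mem_erase.mpr ⟨hfe, hf⟩, Sym2.mem_map.mpr ⟨u, hu, rfl⟩,
      Sym2.mem_map.mpr ⟨w, hw, rfl⟩⟩

end Multigraph

theorem prod_fval_add_prod_fval_succ {V R : Type*} [Fintype V] [DecidableEq V] [CommRing R]
    (γ : R) {p q : V} (hpq : p ≠ q) (g : V → ℕ) :
    ∏ i, fval γ (g i) + ∏ i, fval γ (if i = p ∨ i = q then g i + 1 else g i) =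
      ∏ i, fval γ (if i = q then 0 else if i = p then g p + g q else g i) := by
  have split (h : V → R) : ∏ i, h i = h p * h q * ∏ i ∈ {p, q}ᶜ, h i := by
    rw [← Finset.prod_mul_prod_compl {p, q}, Finset.prod_pair hpq]
  have away {i : V} (hi : i ∈ ({p, q} : Finset V)ᶜ) : i ≠ p ∧ i ≠ q := by simpa using hi
  have rest₁ : ∏ i ∈ {p, q}ᶜ, fval γ (if i = p ∨ i = q then g i + 1 else g i) =
      ∏ i ∈ {p, q}ᶜ, fval γ (g i) := Finset.prod_congr rfl fun i hi => by simp [away hi]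
  have rest₂ : ∏ i ∈ {p, q}ᶜ, fval γ (if i = q then 0 else if i = p then g p + g q else g i) =
      ∏ i ∈ {p, q}ᶜ, fval γ (g i) := Finset.prod_congr rfl fun i hi => by simp [away hi]
  rw [split, split, split, rest₁, rest₂]
  simp [hpq, Ne.symm hpq, fval_add γ (g p) (g q), fval]
  ring

section Theta

variable {V E R : Type*} [Fintype V] [DecidableEq V] [CommRing R]

noncomputable def thetaOn (ends : E → Sym2 V) (U : Finset E) (γ : R) : R :=
  ∑ s ∈ U.powerset, ∏ i, fval γ (mdeg ends s i)

theorem theta_one_eq_thetaOn [Fintype E] (ends : E → Sym2 V) (γ : R) :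
    theta ends 1 γ = thetaOn ends Finset.univ γ := by
  simp [theta, thetaOn, Finset.powerset_univ]

theorem thetaOn_contractEnds (γ : R) {ends : E → Sym2 V} {U : Finset E} {e : E} {p q : V}
    (he : e ∈ U) (hends : ends e = s(p, q)) (hpq : p ≠ q) :
    thetaOn ends U γ = thetaOn (contractEnds ends p q) (U.erase e) γ := by
  rw [thetaOn, ← Finset.insert_erase he, Finset.sum_powerset_insert (Finset.notMem_erase e U),
    ← Finset.sum_add_distrib, Finset.erase_insert (Finset.notMem_erase e U)]
  refine Finset.sum_congr rfl fun s hs => ?_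
  have hes : e ∉ s := fun h => Finset.notMem_erase e U (Finset.mem_powerset.mp hs h)
  simp only [mdeg_insert_of_eq_mk hes hends hpq, mdeg_contractEnds ends s hpq]
  exact prod_fval_add_prod_fval_succ γ hpq _

theorem thetaOn_of_forall_eq_diag (γ : R) {ends : E → Sym2 V} {U : Finset E} {a : V}
    (h : ∀ e ∈ U, ends e = Sym2.diag a) :
    thetaOn ends U γ = ∑ s ∈ U.powerset, fval γ (2 * s.card) := by
  refine Finset.sum_congr rfl fun s hs => ?_
  have hs' : ∀ e ∈ s, ends e = Sym2.diag a := fun e he => h e (Finset.mem_powerset.mp hs he)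
  rw [Fintype.prod_eq_single a fun i hi => by simp [mdeg_of_forall_eq_diag hs', hi, fval],
    mdeg_of_forall_eq_diag hs', if_pos rfl]

end Theta

theorem exists_thetaOn_eq_sum_powerset_fval {V E R : Type*} [Fintype V] [DecidableEq V]
    [CommRing R] (ends : E → Sym2 V) (U : Finset E) (W : Finset V) (hW : W.Nonempty)
    (hends : ∀ e ∈ U, ∀ v ∈ ends e, v ∈ W)
    (hconn : ∀ a ∈ W, ∀ b ∈ W, Relation.ReflTransGen (ShareEdge ends U) a b) :
    ∃ t : Finset E, (t.card : ℤ) = U.card - W.card + 1 ∧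
      ∀ γ : R, thetaOn ends U γ = ∑ s ∈ t.powerset, fval γ (2 * s.card) := by
  obtain ⟨n, hn⟩ : ∃ n, W.card = n + 1 := Nat.exists_eq_add_one.mpr hW.card_pos
  induction n generalizing ends U W with
  | zero =>
    obtain ⟨a, rfl⟩ := Finset.card_eq_one.mp hn
    refine ⟨U, by simp, fun γ => thetaOn_of_forall_eq_diag γ (a := a) fun e he => ?_⟩
    exact Sym2.eq_diag_of_forall_mem_eq fun v hv => Finset.mem_singleton.mp (hends e he v hv)
  | succ n ih =>
    obtain ⟨a, ha, b, hb, hab⟩ := Finset.one_lt_card.mp (by omega : 1 < W.card)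
    obtain ⟨p, q, ⟨e, he, hp, hq⟩, hpq⟩ := (hconn a ha b hb).exists_ne hab
    have hends_e : ends e = s(p, q) := (Sym2.mem_and_mem_iff hpq).mp ⟨hp, hq⟩
    have hqW : q ∈ W := hends e he q hq
    have hpW' : p ∈ W.erase q := Finset.mem_erase.mpr ⟨hpq, hends e he p hp⟩
    have hfix {v : V} (hv : v ≠ q) : Function.update id q p v = v := by
      simp [hv]
    have hmerge {v : V} (hv : v ∈ W) : Function.update id q p v ∈ W.erase q := by
      by_cases hvq : v = q
      · simpa [hvq] using hpW'
      · simpa [hfix hvq] using Finset.mem_erase.mpr ⟨hvq, hv⟩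
    obtain ⟨t, ht, hθ⟩ := ih (contractEnds ends p q) (U.erase e) (W.erase q) ⟨p, hpW'⟩
      (fun f hf v hv => by
        obtain ⟨u, hu, rfl⟩ := Sym2.mem_map.mp hv
        exact hmerge (hends f (Finset.mem_of_mem_erase hf) u hu))
      (fun a ha b hb => by
        have h := reflTransGen_shareEdge_contractEnds hends_e
          (hconn a (Finset.mem_of_mem_erase ha) b (Finset.mem_of_mem_erase hb))
        rwa [hfix (Finset.ne_of_mem_erase ha), hfix (Finset.ne_of_mem_erase hb)] at h)
      (by rw [Finset.card_erase_of_mem hqW]; omega)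
    refine ⟨t, ?_, fun γ => (thetaOn_contractEnds γ he hends_e hpq).trans (hθ γ)⟩
    have hU := Finset.card_pos.mpr ⟨e, he⟩
    rw [ht, Finset.card_erase_of_mem he, Finset.card_erase_of_mem hqW]
    omega

section Counting

variable {R : Type*} [CommRing R] [PartialOrder R] [IsOrderedRing R]

theorem fval_zero_nonneg (n : ℕ) : 0 ≤ fval (0 : R) n := by
  rcases fval_zero_eq_zero_or_one (R := R) n with h | h <;> simp [h]

theorem fval_zero_le_one (n : ℕ) : fval (0 : R) n ≤ 1 := by
  rcases fval_zero_eq_zero_or_one (R := R) n with h | h <;> simp [h]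

theorem one_le_fval_one {n : ℕ} (hn : n ≠ 1) : 1 ≤ fval (1 : R) n := by
  match n, hn with
  | 0, _ => simp [fval]
  | k + 2, _ =>
    rw [fval_one_succ]
    simpa using Nat.mono_cast (α := R) (Nat.fib_pos.mpr k.succ_pos)

theorem fval_one_nonneg (n : ℕ) : 0 ≤ fval (1 : R) n := by
  cases n with
  | zero => simp [fval]
  | succ k => simp [fval_one_succ]

variable {V : Type*} [Fintype V]

theorem prod_fval_zero_le_ite (d : V → ℕ) :
    ∏ i, fval (0 : R) (d i) ≤ if ∀ i, d i ≠ 1 then 1 else 0 := by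
  split_ifs with h
  · exact Finset.prod_le_one (fun i _ => fval_zero_nonneg _) fun i _ => fval_zero_le_one _
  · push Not at h
    obtain ⟨i, hi⟩ := h
    rw [Finset.prod_eq_zero (Finset.mem_univ i) (by rw [hi]; rfl)]

theorem ite_le_prod_fval_one (d : V → ℕ) :
    (if ∀ i, d i ≠ 1 then 1 else 0) ≤ ∏ i, fval (1 : R) (d i) := by
  split_ifs with h
  · exact Finset.one_le_prod fun i _ => one_le_fval_one (h i)
  · exact Finset.prod_nonneg fun i _ => fval_one_nonneg (d i)

variable {E : Type*} [Fintype E] [DecidableEq V]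

theorem theta_zero_le_card (ends : E → Sym2 V) :
    theta ends (1 : R) 0 ≤
      (Finset.univ.filter fun s : Finset E => ∀ i, mdeg ends s i ≠ 1).card := by
  rw [theta, Finset.natCast_card_filter]
  exact Finset.sum_le_sum fun s _ => by simpa using prod_fval_zero_le_ite _

theorem card_le_theta_one (ends : E → Sym2 V) :
    (Finset.univ.filter fun s : Finset E => ∀ i, mdeg ends s i ≠ 1).card ≤
      theta ends (1 : R) 1 := by
  rw [theta, Finset.natCast_card_filter]
  exact Finset.sum_le_sum fun s _ => by simpa using ite_le_prod_fval_one _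

end Counting

/-- Bounds on the number of sub-coregraphs (spanning subgraphs with no vertex of
degree 1) of a connected multigraph `G`, in terms of the nullity `n(G)`. -/
theorem stmt_17 {V E : Type*} [Fintype V] [Fintype E] [DecidableEq V] [Nonempty V]
    (ends : E → Sym2 V)
    (hconn : ∀ a b : V,
      Relation.ReflTransGen (fun u w => ∃ e : E, u ∈ ends e ∧ w ∈ ends e) a b) :
    (2 : ℝ) ^ ((Fintype.card E : ℤ) - Fintype.card V + 1) ≤
      ((Finset.univ.filter (fun s : Finset E => ∀ i : V, mdeg ends s i ≠ 1)).card : ℝ) ∧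
    ((Finset.univ.filter (fun s : Finset E => ∀ i : V, mdeg ends s i ≠ 1)).card : ℝ) ≤
      ((5 - Real.sqrt 5) / 2) ^ (((Fintype.card E : ℤ) - Fintype.card V + 1) - 1) +
      ((5 + Real.sqrt 5) / 2) ^ (((Fintype.card E : ℤ) - Fintype.card V + 1) - 1) := by
  obtain ⟨t, ht, hθ⟩ := exists_thetaOn_eq_sum_powerset_fval (R := ℝ) ends Finset.univ
    Finset.univ Finset.univ_nonempty (fun _ _ v _ => Finset.mem_univ v)
    fun a _ b _ => Relation.ReflTransGen.mono
      (fun u w ⟨e, hu, hw⟩ => ⟨e, Finset.mem_univ e, hu, hw⟩) a b (hconn a b)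
  simp only [Finset.card_univ] at ht
  have hbouquet (γ : ℝ) : theta ends 1 γ = ∑ s ∈ t.powerset, fval γ (2 * s.card) :=
    (theta_one_eq_thetaOn ends γ).trans (hθ γ)
  rw [← ht]
  constructor
  · calc (2 : ℝ) ^ (t.card : ℤ) = theta ends 1 (0 : ℝ) := by
          rw [hbouquet, sum_powerset_fval_zero_two_mul, zpow_natCast]
      _ ≤ _ := theta_zero_le_card ends
  · calc _ ≤ theta ends 1 (1 : ℝ) := card_le_theta_one ends
      _ = _ := by rw [hbouquet, sum_powerset_fval_one_two_mul]
end
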